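/- Let 𝔖 = {R_1, …, R_L} with L > 0 be a simple semi-Thue system over {0, 1, …, K}, and let m > 0. If N ∈ Q_m is such that Γ_m ⊢ N : κ, S_G(N)[p_1 := G_1^0, …, p_m := G_m^0] =β π_1, and S_G(N)[p_1 := G_1^i, …, p_m := G_m^i] =β π_0 for every i ∈ {1, …, m+1}, then there exists M ∈ R_1 such that Γ_1 ⊢ M : κ, S_G(M)[p_1 := δ_•] =β π_$, S_G(M)[p_1 := δ_1] =β π_0, and S_G(M)[p_1 := δ_0] =β π_1. -/

import Mathlib

set_option maxHeartbeats 1000000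

/-- Untyped λ-terms with de Bruijn indices. -/
inductive Tm : Type
  | var : ℕ → Tm
  | app : Tm → Tm → Tm
  | lam : Tm → Tm
deriving DecidableEq

/-- Simple types over the single ground atom ι. -/
inductive Ty : Type
  | atom : Ty
  | arr : Ty → Ty → Ty
deriving DecidableEq

/-- Lift a renaming under a binder. -/
def upRen (ξ : ℕ → ℕ) : ℕ → ℕ
  | 0 => 0
  | n + 1 => ξ n + 1

/-- Renaming of de Bruijn variables. -/
def rename (ξ : ℕ → ℕ) : Tm → Tm
  | .var n => .var (ξ n)
  | .app s t => .app (rename ξ s) (rename ξ t)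
  | .lam s => .lam (rename (upRen ξ) s)

/-- Lift a substitution under a binder. -/
def up (σ : ℕ → Tm) : ℕ → Tm
  | 0 => .var 0
  | n + 1 => rename Nat.succ (σ n)

/-- Parallel (capture-avoiding) substitution. -/
def subst (σ : ℕ → Tm) : Tm → Tm
  | .var n => σ n
  | .app s t => .app (subst σ s) (subst σ t)
  | .lam s => .lam (subst (up σ) s)

/-- Cons a term onto a substitution. -/
def scons (N : Tm) (σ : ℕ → Tm) : ℕ → Tm
  | 0 => N
  | n + 1 => σ n

/-- Substitution of the topmost free variable: `M[x₀ := N]` (β-substitution). -/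
def subst1 (N M : Tm) : Tm := subst (scons N Tm.var) M

/-- β-reduction: contextual closure of `(λx.M) N →β M[x := N]`. -/
inductive Step : Tm → Tm → Prop
  | beta (s t : Tm) : Step (.app (.lam s) t) (subst1 t s)
  | appL {s s' : Tm} (t : Tm) : Step s s' → Step (.app s t) (.app s' t)
  | appR (s : Tm) {t t' : Tm} : Step t t' → Step (.app s t) (.app s t')
  | lam {s s' : Tm} : Step s s' → Step (.lam s) (.lam s')

/-- β-equivalence: reflexive, transitive, symmetric closure of β-reduction. -/
def Conv (M N : Tm) : Prop := Relation.EqvGen Step M N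

/-- A term is in normal form if it admits no β-reduction step. -/
def NormalTm (M : Tm) : Prop := ∀ N, ¬ Step M N

/-- Simple type system (de Bruijn contexts as lists, innermost binder first). -/
inductive Stlc : List Ty → Tm → Ty → Prop
  | var {Γ : List Ty} {x : ℕ} {t : Ty} : Γ[x]? = some t → Stlc Γ (.var x) t
  | app {Γ : List Ty} {M N : Tm} {s t : Ty} :
      Stlc Γ M (.arr s t) → Stlc Γ N s → Stlc Γ (.app M N) t
  | lam {Γ : List Ty} {M : Tm} {s t : Ty} :
      Stlc (s :: Γ) M t → Stlc Γ (.lam M) (.arr s t)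

/-- The identity term `I = λx.x`. -/
def Itm : Tm := .lam (.var 0)

/-- `n` nested λ-abstractions. -/
def lamN : ℕ → Tm → Tm
  | 0, M => M
  | n + 1, M => .lam (lamN n M)

/-- Iterated application `M N₁ … Nₖ`. -/
def appList (M : Tm) (l : List Tm) : Tm := l.foldl .app M

/-- `n`-fold arrow type `ι → … → ι → t`. -/
def arrN : ℕ → Ty → Ty
  | 0, t => t
  | n + 1, t => .arr .atom (arrN n t)

/-- A rewrite rule `ab ⇒ cd`, stored as `((a,b),(c,d))`; symbols are naturals. -/
abbrev SRule := (ℕ × ℕ) × (ℕ × ℕ)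

/-- One-step rewriting of a simple semi-Thue system given by a list of rules. -/
def SStep (Rs : List SRule) (u v : List ℕ) : Prop :=
  ∃ x y a b c d, ((a, b), (c, d)) ∈ Rs ∧ u = x ++ a :: b :: y ∧ v = x ++ c :: d :: y

/-- Many-step rewriting `⇒*`. -/
def SRew (Rs : List SRule) : List ℕ → List ℕ → Prop := Relation.ReflTransGen (SStep Rs)

/-! Extended alphabet `𝒜 = {0,…,K} ∪ {$, •, ⊤, ⊥}` of size `K+5`, encoded as
`0,…,K` for letters, `K+1` for `$`, `K+2` for `•`, `K+3` for `⊤`, `K+4` for `⊥`. -/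

/-- The simple type `κ` with `|𝒜| = K+5` argument positions. -/
def tyK (K : ℕ) : Ty := arrN (K + 5) .atom

/-- `κ → κ`, the type of `p_j`. -/
def tyP (K : ℕ) : Ty := .arr (tyK K) (tyK K)

/-- `(κ→κ) → κ → κ`, the type of `z_0` and of each `r_i`. -/
def tyZ0 (K : ℕ) : Ty := .arr (tyP K) (.arr (tyK K) (tyK K))

/-- `(κ→κ) → ((κ→κ) → κ) → κ`, the type of `z_⋆`. -/
def tyZstar (K : ℕ) : Ty := .arr (tyP K) (.arr (.arr (tyP K) (tyK K)) (tyK K))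

/-- The variable `s_i` under the `K+5` binders `λ s_0 … s_K s_$ s_• s_⊤ s_⊥`. -/
def sv (K i : ℕ) : Tm := .var (K + 4 - i)

/-- `case x of {…}`: the application `x N_0 N_1 … N_K N_$ N_• N_⊤ N_⊥`,
where the branch for symbol `i` is `f i`. -/
def caseOf (K : ℕ) (x : Tm) (f : ℕ → Tm) : Tm := appList x ((List.range (K + 5)).map f)

/-- The projection `π_i = λ s_0 … s_⊥ . s_i`. -/
def piTm (K i : ℕ) : Tm := lamN (K + 5) (sv K i)

/-- `δ_i = λx. λ s_0 … s_⊥ . case x of {⊤ ↦ s_i} else s_⊥`. -/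
def deltaTm (K i : ℕ) : Tm :=
  .lam (lamN (K + 5) (caseOf K (.var (K + 5))
    (fun j => if j = K + 3 then sv K i else sv K (K + 4))))

/-- `H_⋆ = λh.λg.λ s_0 … s_⊥ . case (g δ_•) of {$ ↦ s_$} else s_⊥`. -/
def Hstar (K : ℕ) : Tm :=
  .lam (.lam (lamN (K + 5) (caseOf K (.app (.var (K + 5)) (deltaTm K (K + 2)))
    (fun j => if j = K + 1 then sv K (K + 1) else sv K (K + 4)))))

/-- `H_0 = λh.λx.λ s_0 … s_⊥ . case x of {1 ↦ s_$} else s_⊥`. -/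
def H0 (K : ℕ) : Tm :=
  .lam (.lam (lamN (K + 5) (caseOf K (.var (K + 5))
    (fun j => if j = 1 then sv K (K + 1) else sv K (K + 4)))))

/-- `H_R = λh.λx.λ s_0 … s_⊥ . case (h π_⊤) of {• ↦ case x of {1 ↦ s_1} else s_⊥} else s_⊥`. -/
def HR (K : ℕ) : Tm :=
  .lam (.lam (lamN (K + 5) (caseOf K (.app (.var (K + 6)) (piTm K (K + 3)))
    (fun j => if j = K + 2 then
        caseOf K (.var (K + 5)) (fun j' => if j' = 1 then sv K 1 else sv K (K + 4))
      else sv K (K + 4)))))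

/-- `G_⋆` (word expansion). -/
def Gstar (K : ℕ) : Tm :=
  .lam (.lam (lamN (K + 5) (caseOf K (.app (.var (K + 6)) (piTm K (K + 3))) (fun j =>
    if j = K + 2 then
      caseOf K (.app (.var (K + 5)) (deltaTm K (K + 2))) (fun j1 =>
        if j1 = 0 then sv K 0
        else if j1 = K + 1 then
          caseOf K (.app (.var (K + 5)) (deltaTm K 0))
            (fun j2 => if j2 = 1 then sv K (K + 1) else sv K (K + 4))
        else sv K (K + 4))
    else if j = 0 then
      caseOf K (.app (.var (K + 5)) (deltaTm K 1))
        (fun j1 => if j1 = 0 then sv K 1 else sv K (K + 4))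
    else if j = 1 then
      caseOf K (.app (.var (K + 5)) (deltaTm K (K + 2)))
        (fun j1 => if j1 = 0 then sv K 0 else sv K (K + 4))
    else sv K (K + 4)))))

/-- `G_0` (initialization with 0s). -/
def G0 (K : ℕ) : Tm :=
  .lam (.lam (lamN (K + 5) (caseOf K (.app (.var (K + 6)) (piTm K (K + 3))) (fun j =>
    if j = K + 2 then
      caseOf K (.var (K + 5))
        (fun j1 => if j1 = 0 then sv K 0 else if j1 = 1 then sv K (K + 1) else sv K (K + 4))
    else if j = 0 then
      caseOf K (.var (K + 5)) (fun j1 => if j1 = 0 then sv K 1 else sv K (K + 4))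
    else if j = 1 then
      caseOf K (.var (K + 5)) (fun j1 => if j1 = 0 then sv K 0 else sv K (K + 4))
    else sv K (K + 4)))))

/-- `G_{ab⇒cd}` (rule application), for the rule `R = ((a,b),(c,d))`. -/
def Grule (K : ℕ) (R : SRule) : Tm :=
  .lam (.lam (lamN (K + 5) (caseOf K (.app (.var (K + 6)) (piTm K (K + 3))) (fun j =>
    if j = K + 2 then
      caseOf K (.var (K + 5)) (fun j1 => sv K j1)
    else if j = 0 then
      caseOf K (.var (K + 5)) (fun j1 => if j1 = R.2.2 then sv K R.1.2 else sv K (K + 4))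
    else if j = 1 then
      caseOf K (.var (K + 5)) (fun j1 => if j1 = R.2.1 then sv K R.1.1 else sv K (K + 4))
    else sv K (K + 4)))))

/-- `G_j^i`: `δ_1` if `i = j`, `δ_0` if `i = j+1`, `δ_•` otherwise. -/
def Gji (K i j : ℕ) : Tm :=
  if i = j then deltaTm K 1 else if i = j + 1 then deltaTm K 0 else deltaTm K (K + 2)

/-! De Bruijn convention for the free variables of terms in `Q_m`, `R_m`
(for a system with `L` rules): `p_j ↦ var (m - j)` (so `p_m ↦ var 0`, …, `p_1 ↦ var (m-1)`),
`z_⋆ ↦ var m`, `z_1 ↦ var (m+1)`, `z_0 ↦ var (m+2)`, `r_i ↦ var (m+3+L-i)`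
(so `r_L ↦ var (m+3)`, …, `r_1 ↦ var (m+2+L)`). -/

/-- The type environment `Γ_m` (as a de Bruijn context). -/
def GammaEnv (L K m : ℕ) : List Ty :=
  List.replicate m (tyP K) ++ tyZstar K :: tyK K :: tyZ0 K :: List.replicate L (tyZ0 K)

/-- The set `Q_m` of terms (for a system with `L` rules). -/
inductive Qset (L : ℕ) : ℕ → Tm → Prop
  | z1 (m : ℕ) : Qset L m (.var (m + 1))
  | rule (m i j : ℕ) (M : Tm) : 1 ≤ i → i ≤ L → 1 ≤ j → j ≤ m → Qset L m M →
      Qset L m (.app (.app (.var (m + 3 + L - i)) (.var (m - j))) M)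
  | ruleEta (m i j : ℕ) (M : Tm) : 1 ≤ i → i ≤ L → 1 ≤ j → j ≤ m → Qset L m M →
      Qset L m (.app (.app (.var (m + 3 + L - i)) (.lam (.app (.var (m - j + 1)) (.var 0)))) M)

/-- The set `R_m` of terms (for a system with `L` rules). -/
inductive Rset (L : ℕ) : ℕ → Tm → Prop
  | init (m : ℕ) (N M : Tm) : Qset L m M → Rset L m (.app (.app (.var (m + 2)) N) M)
  | expand (m : ℕ) (N M : Tm) : Rset L (m + 1) M → Rset L m (.app (.app (.var m) N) (.lam M))

/-- A simultaneous substitution on the free variables of terms in `Q_m`/`R_m`: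
`p_j ↦ P j`, `z_⋆ ↦ Xstar`, `z_1 ↦ X1`, `z_0 ↦ X0`, `r_i ↦ Xr i`; other variables fixed. -/
def mkSub (L m : ℕ) (P : ℕ → Tm) (Xstar X1 X0 : Tm) (Xr : ℕ → Tm) : ℕ → Tm := fun k =>
  if k < m then P (m - k)
  else if k = m then Xstar
  else if k = m + 1 then X1
  else if k = m + 2 then X0
  else if k < m + 3 + L then Xr (m + 3 + L - k)
  else .var k

/-- The substitution `S_F` combined with `[p_j := P j]`; the fixed free variable `u`
is taken to be `var 0` (in the resulting scope). -/
def SF (L m : ℕ) (P : ℕ → Tm) : ℕ → Tm :=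
  mkSub L m P (.lam (.lam (.app (.var 0) Itm))) (.var 0) (.lam Itm) (fun _ => Itm)

/-- The substitution `S_H` combined with `[p_j := P j]`. -/
def SH (L K m : ℕ) (P : ℕ → Tm) : ℕ → Tm :=
  mkSub L m P (Hstar K) (piTm K 1) (H0 K) (fun _ => HR K)

/-- The substitution `S_G` combined with `[p_j := P j]` (`r_i ↦ G_{R_i}`). -/
def SG (K : ℕ) (Rs : List SRule) (m : ℕ) (P : ℕ → Tm) : ℕ → Tm :=
  mkSub Rs.length m P (Gstar K) (piTm K 1) (G0 K)
    (fun i => Grule K (Rs.getD (i - 1) ((0, 0), (0, 0))))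

/-- The simple type `σ_𝔖 = Γ_1(r_1) → ⋯ → Γ_1(r_L) → Γ_1(z_0) → Γ_1(z_1) → Γ_1(z_⋆) → Γ_1(p_1) → κ`. -/
def sigmaTy (L K : ℕ) : Ty :=
  (List.replicate L (tyZ0 K) ++ [tyZ0 K, tyK K, tyZstar K, tyP K]).foldr .arr (tyK K)

/-! ### σ-calculus infrastructure -/

theorem rename_ext : ∀ (M : Tm) {ξ ζ : ℕ → ℕ}, (∀ n, ξ n = ζ n) →
    rename ξ M = rename ζ M
  | .var n, _, _, h => by simp [rename, h n]
  | .app s t, _, _, h => by simp [rename, rename_ext s h, rename_ext t h]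
  | .lam s, ξ, ζ, h => by
    simp only [rename, Tm.lam.injEq]
    exact rename_ext s (fun n => by cases n <;> simp [upRen, h])

theorem subst_ext : ∀ (M : Tm) {σ τ : ℕ → Tm}, (∀ n, σ n = τ n) →
    subst σ M = subst τ M
  | .var n, _, _, h => h n
  | .app s t, _, _, h => by simp [subst, subst_ext s h, subst_ext t h]
  | .lam s, σ, τ, h => by
    simp only [subst, Tm.lam.injEq]
    exact subst_ext s (fun n => by cases n <;> simp [up, h])

theorem rename_id' : ∀ (M : Tm) {ξ : ℕ → ℕ}, (∀ n, ξ n = n) → rename ξ M = M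
  | .var n, _, h => by simp [rename, h n]
  | .app s t, _, h => by simp [rename, rename_id' s h, rename_id' t h]
  | .lam s, ξ, h => by
    simp only [rename, Tm.lam.injEq]
    exact rename_id' s (fun n => by cases n <;> simp [upRen, h])

theorem subst_id' : ∀ (M : Tm) {σ : ℕ → Tm}, (∀ n, σ n = .var n) → subst σ M = M
  | .var n, _, h => h n
  | .app s t, _, h => by simp [subst, subst_id' s h, subst_id' t h]
  | .lam s, σ, h => by
    simp only [subst, Tm.lam.injEq]
    exact subst_id' s (fun n => by cases n <;> simp [up, h, rename])

theorem rename_rename : ∀ (M : Tm) (ξ ζ : ℕ → ℕ),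
    rename ξ (rename ζ M) = rename (fun n => ξ (ζ n)) M
  | .var n, _, _ => rfl
  | .app s t, _, _ => by simp [rename, rename_rename s, rename_rename t]
  | .lam s, ξ, ζ => by
    simp only [rename, Tm.lam.injEq]
    rw [rename_rename s]
    exact rename_ext s (fun n => by cases n <;> simp [upRen])

theorem subst_rename : ∀ (M : Tm) (σ : ℕ → Tm) (ζ : ℕ → ℕ),
    subst σ (rename ζ M) = subst (fun n => σ (ζ n)) M
  | .var n, _, _ => rfl
  | .app s t, _, _ => by simp [rename, subst, subst_rename s, subst_rename t]
  | .lam s, σ, ζ => by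
    simp only [rename, subst, Tm.lam.injEq]
    rw [subst_rename s]
    exact subst_ext s (fun n => by cases n <;> simp [up, upRen])

theorem rename_subst : ∀ (M : Tm) (ξ : ℕ → ℕ) (σ : ℕ → Tm),
    rename ξ (subst σ M) = subst (fun n => rename ξ (σ n)) M
  | .var n, _, _ => rfl
  | .app s t, _, _ => by simp [rename, subst, rename_subst s, rename_subst t]
  | .lam s, ξ, σ => by
    simp only [rename, subst, Tm.lam.injEq]
    rw [rename_subst s]
    refine subst_ext s (fun n => ?_)
    cases n with
    | zero => rfl
    | succ n =>
      show rename (upRen ξ) (rename Nat.succ (σ n)) = rename Nat.succ (rename ξ (σ n))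
      rw [rename_rename, rename_rename]
      exact rename_ext _ (fun k => by simp [upRen])

theorem subst_subst : ∀ (M : Tm) (τ σ : ℕ → Tm),
    subst τ (subst σ M) = subst (fun n => subst τ (σ n)) M
  | .var n, _, _ => rfl
  | .app s t, _, _ => by simp [subst, subst_subst s, subst_subst t]
  | .lam s, τ, σ => by
    simp only [subst, Tm.lam.injEq]
    rw [subst_subst s]
    refine subst_ext s (fun n => ?_)
    cases n with
    | zero => rfl
    | succ n =>
      show subst (up τ) (rename Nat.succ (σ n)) = rename Nat.succ (subst τ (σ n))
      rw [subst_rename, rename_subst]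
      exact subst_ext _ (fun k => rfl)

/-! ### Free-variable bounds -/

def VarsLt : ℕ → Tm → Prop
  | c, .var n => n < c
  | c, .app s t => VarsLt c s ∧ VarsLt c t
  | c, .lam s => VarsLt (c + 1) s

theorem varsLt_mono : ∀ (M : Tm) {b c : ℕ}, b ≤ c → VarsLt b M → VarsLt c M
  | .var n, _, _, h, hv => lt_of_lt_of_le hv h
  | .app s t, _, _, h, hv => ⟨varsLt_mono s h hv.1, varsLt_mono t h hv.2⟩
  | .lam s, _, _, h, hv => varsLt_mono s (by omega) hv

theorem varsLt_rename : ∀ (M : Tm) {b c : ℕ} {ξ : ℕ → ℕ}, VarsLt b M →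
    (∀ n, n < b → ξ n < c) → VarsLt c (rename ξ M)
  | .var n, _, _, _, hv, h => h n hv
  | .app s t, _, _, _, hv, h => ⟨varsLt_rename s hv.1 h, varsLt_rename t hv.2 h⟩
  | .lam s, b, c, ξ, hv, h => varsLt_rename s hv (fun n hn => by
      cases n with
      | zero => simp [upRen]
      | succ n => simpa [upRen] using h n (by omega))

theorem varsLt_subst : ∀ (M : Tm) {b c : ℕ} {σ : ℕ → Tm}, VarsLt b M →
    (∀ n, n < b → VarsLt c (σ n)) → VarsLt c (subst σ M)
  | .var n, _, _, _, hv, h => h n hv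
  | .app s t, _, _, _, hv, h => ⟨varsLt_subst s hv.1 h, varsLt_subst t hv.2 h⟩
  | .lam s, b, c, σ, hv, h => varsLt_subst s hv (fun n hn => by
      cases n with
      | zero => simp [up, VarsLt]
      | succ n =>
        show VarsLt (c+1) (rename Nat.succ (σ n))
        exact varsLt_rename _ (h n (by omega)) (fun k hk => by omega))

theorem subst_ext_lt : ∀ (M : Tm) {b : ℕ} {σ τ : ℕ → Tm}, VarsLt b M →
    (∀ n, n < b → σ n = τ n) → subst σ M = subst τ M
  | .var n, _, _, _, hv, h => h n hv
  | .app s t, _, _, _, hv, h => by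
      simp [subst, subst_ext_lt s hv.1 h, subst_ext_lt t hv.2 h]
  | .lam s, b, σ, τ, hv, h => by
      simp only [subst, Tm.lam.injEq]
      refine subst_ext_lt s hv (fun n hn => ?_)
      cases n with
      | zero => rfl
      | succ n => show rename _ (σ n) = rename _ (τ n); rw [h n (by omega)]

theorem subst_closed {M : Tm} (hv : VarsLt 0 M) (σ : ℕ → Tm) : subst σ M = M := by
  rw [subst_ext_lt M hv (τ := Tm.var) (fun n hn => by omega)]
  exact subst_id' M (fun _ => rfl)

theorem rename_closed {M : Tm} (hv : VarsLt 0 M) (ξ : ℕ → ℕ) : rename ξ M = M := by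
  have h1 : ∀ (M : Tm) {b : ℕ} {ξ ζ : ℕ → ℕ}, VarsLt b M → (∀ n, n < b → ξ n = ζ n) →
      rename ξ M = rename ζ M := by
    intro M
    induction M with
    | var n => intro b ξ ζ hv h; simp [rename, h n hv]
    | app s t ihs iht => intro b ξ ζ hv h; simp [rename, ihs hv.1 h, iht hv.2 h]
    | lam s ih =>
      intro b ξ ζ hv h
      simp only [rename, Tm.lam.injEq]
      refine ih hv (fun n hn => ?_)
      cases n with
      | zero => rfl
      | succ n => simp [upRen, h n (by omega)]
  rw [h1 M hv (ζ := id) (fun n hn => by omega)]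
  exact rename_id' M (fun _ => rfl)

/-! ### Conv lemmas -/

theorem conv_refl (M : Tm) : Conv M M := Relation.EqvGen.refl M
theorem conv_symm {M N : Tm} (h : Conv M N) : Conv N M := Relation.EqvGen.symm _ _ h
theorem conv_trans {M N P : Tm} (h : Conv M N) (h' : Conv N P) : Conv M P :=
  Relation.EqvGen.trans _ _ _ h h'
theorem conv_step {M N : Tm} (h : Step M N) : Conv M N := Relation.EqvGen.rel _ _ h

theorem conv_appL {s s' : Tm} (t : Tm) (h : Conv s s') : Conv (.app s t) (.app s' t) := by
  induction h with
  | rel _ _ h => exact conv_step (Step.appL t h)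
  | refl _ => exact conv_refl _
  | symm _ _ _ ih => exact conv_symm ih
  | trans _ _ _ _ _ ih1 ih2 => exact conv_trans ih1 ih2

theorem conv_appR (s : Tm) {t t' : Tm} (h : Conv t t') : Conv (.app s t) (.app s t') := by
  induction h with
  | rel _ _ h => exact conv_step (Step.appR s h)
  | refl _ => exact conv_refl _
  | symm _ _ _ ih => exact conv_symm ih
  | trans _ _ _ _ _ ih1 ih2 => exact conv_trans ih1 ih2

theorem conv_app {s s' t t' : Tm} (h : Conv s s') (h' : Conv t t') :
    Conv (.app s t) (.app s' t') := conv_trans (conv_appL t h) (conv_appR s' h')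

theorem conv_lam {s s' : Tm} (h : Conv s s') : Conv (.lam s) (.lam s') := by
  induction h with
  | rel _ _ h => exact conv_step (Step.lam h)
  | refl _ => exact conv_refl _
  | symm _ _ _ ih => exact conv_symm ih
  | trans _ _ _ _ _ ih1 ih2 => exact conv_trans ih1 ih2

theorem conv_lamN {s s' : Tm} (n : ℕ) (h : Conv s s') : Conv (lamN n s) (lamN n s') := by
  induction n with
  | zero => exact h
  | succ n ih => exact conv_lam ih

theorem conv_appList {s s' : Tm} (l : List Tm) (h : Conv s s') :
    Conv (appList s l) (appList s' l) := by
  induction l generalizing s s' with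
  | nil => exact h
  | cons a l ih => exact ih (conv_app h (conv_refl a))
/-! ### lamN / appList substitution and β-evaluation -/

def upN : ℕ → (ℕ → Tm) → ℕ → Tm
  | 0, σ => σ
  | n + 1, σ => upN n (up σ)

theorem subst_lamN (σ : ℕ → Tm) (n : ℕ) (B : Tm) :
    subst σ (lamN n B) = lamN n (subst (upN n σ) B) := by
  induction n generalizing σ with
  | zero => rfl
  | succ n ih => show Tm.lam (subst (up σ) (lamN n B)) = _; rw [ih]; rfl

theorem upN_spec (n : ℕ) (σ : ℕ → Tm) (k : ℕ) :
    upN n σ k = if k < n then .var k else rename (fun x => x + n) (σ (k - n)) := by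
  induction n generalizing σ k with
  | zero =>
    simp only [upN, Nat.not_lt_zero, if_false, Nat.sub_zero]
    exact (rename_id' (σ k) (fun x => Nat.add_zero x)).symm
  | succ n ih =>
    show upN n (up σ) k = _
    rw [ih]
    rcases Nat.lt_trichotomy k n with h | h | h
    · rw [if_pos h, if_pos (by omega)]
    · subst h
      rw [if_neg (by omega), if_pos (by omega), Nat.sub_self]
      show rename _ (Tm.var 0) = _
      simp [rename]
    · rw [if_neg (by omega), if_neg (by omega)]
      have hk : k - n = (k - (n+1)) + 1 := by omega
      rw [hk]
      show rename _ (rename Nat.succ (σ (k - (n+1)))) = _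
      rw [rename_rename]
      exact rename_ext _ (fun x => by omega)

theorem upN_lt {n k : ℕ} (σ : ℕ → Tm) (h : k < n) : upN n σ k = .var k := by
  rw [upN_spec, if_pos h]

theorem subst_appList (σ : ℕ → Tm) (M : Tm) (l : List Tm) :
    subst σ (appList M l) = appList (subst σ M) (l.map (subst σ)) := by
  induction l generalizing M with
  | nil => rfl
  | cons a l ih =>
    show subst σ (appList (.app M a) l) = _
    rw [ih]; rfl

theorem subst_caseOf (σ : ℕ → Tm) (K : ℕ) (x : Tm) (f : ℕ → Tm) :
    subst σ (caseOf K x f) = caseOf K (subst σ x) (fun j => subst σ (f j)) := by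
  unfold caseOf
  rw [subst_appList, List.map_map]
  rfl

/-- The substitution produced by an `n`-fold β-reduction. -/
def listSub (l : List Tm) (k : ℕ) : Tm := l.reverse.getD k (.var (k - l.length))

theorem conv_betaN : ∀ (l : List Tm) (B : Tm),
    Conv (appList (lamN l.length B) l) (subst (listSub l) B) := by
  intro l
  induction l with
  | nil =>
    intro B
    have : subst (listSub []) B = B := subst_id' B (fun n => by
      simp [listSub, List.getD])
    rw [this]; exact conv_refl B
  | cons a l ih =>
    intro B
    show Conv (appList (.app (.lam (lamN l.length B)) a) l) _
    have h1 : Step (.app (.lam (lamN l.length B)) a) (subst1 a (lamN l.length B)) :=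
      Step.beta _ _
    have h2 : subst1 a (lamN l.length B)
        = lamN l.length (subst (upN l.length (scons a Tm.var)) B) := by
      unfold subst1; rw [subst_lamN]
    refine conv_trans (conv_appList l (conv_step h1)) ?_
    rw [h2]
    refine conv_trans (ih _) ?_
    rw [subst_subst]
    have : ∀ k, subst (listSub l) (upN l.length (scons a Tm.var) k) = listSub (a :: l) k := by
      intro k
      set n := l.length with hn
      have hrev : (a :: l).reverse = l.reverse ++ [a] := by simp
      rw [upN_spec]
      rcases Nat.lt_trichotomy k n with h | h | h
      · rw [if_pos h]
        show listSub l k = _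
        unfold listSub
        rw [hrev]
        have hk1 : k < l.reverse.length := by simpa using h
        have hk2 : k < (l.reverse ++ [a]).length := by simp; omega
        rw [List.getD_eq_getElem _ _ hk1, List.getD_eq_getElem _ _ hk2,
          List.getElem_append_left]
      · subst h
        rw [if_neg (by omega), Nat.sub_self]
        show subst (listSub l) (rename _ a) = _
        rw [subst_rename]
        have ha : subst (fun x => listSub l (x + n)) a = a := by
          refine subst_id' a (fun x => ?_)
          unfold listSub
          rw [List.getD_eq_default]
          · congr 1; omega
          · simp; omega
        rw [ha]
        unfold listSub
        rw [hrev]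
        have hk2 : n < (l.reverse ++ [a]).length := by simp; omega
        rw [List.getD_eq_getElem _ _ hk2,
          List.getElem_append_right (by simp; omega)]
        simp
      · rw [if_neg (by omega)]
        have hk : k - n = (k - n - 1) + 1 := by omega
        rw [hk]
        show listSub l (k - n - 1 + n) = listSub (a :: l) k
        unfold listSub
        rw [hrev, List.getD_eq_default _ _ (by simp only [List.length_reverse]; omega),
          List.getD_eq_default _ _ (by simp only [List.length_append, List.length_reverse,
            List.length_cons, List.length_nil]; omega)]
        congr 1
        simp only [List.length_cons]
        omega
    rw [subst_ext B this]
    exact conv_refl _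

theorem listSub_map_range (n j : ℕ) (f : ℕ → Tm) (hj : j < n) :
    listSub ((List.range n).map f) (n - 1 - j) = f j := by
  unfold listSub
  have hlen : ((List.range n).map f).length = n := by simp
  have h1 : n - 1 - j < ((List.range n).map f).reverse.length := by simp; omega
  rw [List.getD_eq_getElem _ _ h1]
  rw [List.getElem_reverse]
  simp only [List.getElem_map, List.getElem_range]
  congr 1
  simp only [List.length_map, List.length_range]
  omega

theorem conv_case {K : ℕ} {x : Tm} (f : ℕ → Tm) {j : ℕ} (hj : j < K + 5)
    (hx : Conv x (piTm K j)) : Conv (caseOf K x f) (f j) := by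
  unfold caseOf
  refine conv_trans (conv_appList _ hx) ?_
  have hlen : ((List.range (K+5)).map f).length = K + 5 := by simp
  have h1 : Conv (appList (lamN ((List.range (K+5)).map f).length (sv K j))
      ((List.range (K+5)).map f)) (subst (listSub ((List.range (K+5)).map f)) (sv K j)) :=
    conv_betaN _ _
  rw [hlen] at h1
  refine conv_trans h1 ?_
  show Conv (listSub _ (K + 4 - j)) _
  have : K + 4 - j = (K + 5) - 1 - j := by omega
  rw [this, listSub_map_range _ _ _ hj]
  exact conv_refl _

theorem subst1_subst_up (a : Tm) (σ : ℕ → Tm) (B : Tm) :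
    subst1 a (subst (up σ) B) = subst (scons a σ) B := by
  unfold subst1
  rw [subst_subst]
  refine subst_ext B (fun n => ?_)
  cases n with
  | zero => rfl
  | succ n =>
    show subst (scons a Tm.var) (rename Nat.succ (σ n)) = σ n
    rw [subst_rename]
    exact subst_id' _ (fun k => rfl)

theorem conv_app2 (B h x : Tm) :
    Conv (.app (.app (.lam (.lam B)) h) x) (subst (scons x (scons h Tm.var)) B) := by
  have h1 : Step (.app (.lam (.lam B)) h) (subst1 h (.lam B)) := Step.beta _ _
  have h2 : subst1 h (.lam B) = .lam (subst (up (scons h Tm.var)) B) := rfl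
  refine conv_trans (conv_appL x (conv_step h1)) ?_
  rw [h2]
  refine conv_trans (conv_step (Step.beta _ _)) ?_
  rw [subst1_subst_up]
  exact conv_refl _
/-! ### Closedness of the combinators -/

theorem varsLt_ite {c : ℕ} {P : Prop} [Decidable P] {A B : Tm} (hA : VarsLt c A)
    (hB : VarsLt c B) : VarsLt c (if P then A else B) := by
  split <;> assumption

theorem subst_app (σ : ℕ → Tm) (s t : Tm) :
    subst σ (Tm.app s t) = .app (subst σ s) (subst σ t) := rfl

theorem varsLt_sv {c K : ℕ} (i : ℕ) (h : K + 5 ≤ c) : VarsLt c (sv K i) := by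
  show K + 4 - i < c; omega

theorem varsLt_lamN {B : Tm} {c : ℕ} (n : ℕ) (h : VarsLt (c + n) B) :
    VarsLt c (lamN n B) := by
  induction n generalizing c with
  | zero => exact h
  | succ n ih =>
    show VarsLt (c + 1) (lamN n B)
    exact ih (varsLt_mono B (by omega) h)

theorem varsLt_appList {M : Tm} {c : ℕ} {l : List Tm} (hM : VarsLt c M)
    (hl : ∀ a ∈ l, VarsLt c a) : VarsLt c (appList M l) := by
  induction l generalizing M with
  | nil => exact hM
  | cons a l ih =>
    exact ih ⟨hM, hl a List.mem_cons_self⟩ (fun b hb => hl b (List.mem_cons_of_mem a hb))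

theorem varsLt_caseOf {K c : ℕ} {x : Tm} {f : ℕ → Tm} (hx : VarsLt c x)
    (hf : ∀ j, VarsLt c (f j)) : VarsLt c (caseOf K x f) := by
  refine varsLt_appList hx (fun a ha => ?_)
  simp only [List.mem_map] at ha
  obtain ⟨j, _, rfl⟩ := ha
  exact hf j

theorem varsLt_piTm (c K i : ℕ) : VarsLt c (piTm K i) :=
  varsLt_lamN _ (varsLt_sv i (by omega))

theorem varsLt_deltaTm (c K i : ℕ) : VarsLt c (deltaTm K i) := by
  show VarsLt (c + 1) (lamN (K + 5) _)
  refine varsLt_lamN _ (varsLt_caseOf ?_ (fun j => ?_))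
  · show K + 5 < c + 1 + (K + 5); omega
  · split <;> exact varsLt_sv _ (by omega)

theorem varsLt_G0 (c K : ℕ) : VarsLt c (G0 K) := by
  show VarsLt (c + 1 + 1) (lamN (K + 5) _)
  have hx : VarsLt (c + 1 + 1 + (K + 5)) (Tm.var (K + 5)) := by
    show K + 5 < c + 1 + 1 + (K + 5); omega
  refine varsLt_lamN _ (varsLt_caseOf ⟨?_, varsLt_piTm _ _ _⟩ (fun j => ?_))
  · show K + 6 < c + 1 + 1 + (K + 5); omega
  · refine varsLt_ite (varsLt_caseOf hx (fun j1 => varsLt_ite (varsLt_sv _ (by omega))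
      (varsLt_ite (varsLt_sv _ (by omega)) (varsLt_sv _ (by omega)))))
      (varsLt_ite (varsLt_caseOf hx (fun j1 => varsLt_ite (varsLt_sv _ (by omega))
        (varsLt_sv _ (by omega))))
      (varsLt_ite (varsLt_caseOf hx (fun j1 => varsLt_ite (varsLt_sv _ (by omega))
        (varsLt_sv _ (by omega)))) (varsLt_sv _ (by omega))))
theorem varsLt_Gstar (c K : ℕ) : VarsLt c (Gstar K) := by
  show VarsLt (c + 1 + 1) (lamN (K + 5) _)
  have hx : VarsLt (c + 1 + 1 + (K + 5)) (Tm.var (K + 5)) := by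
    show K + 5 < c + 1 + 1 + (K + 5); omega
  refine varsLt_lamN _ (varsLt_caseOf ⟨?_, varsLt_piTm _ _ _⟩ (fun j => ?_))
  · show K + 6 < c + 1 + 1 + (K + 5); omega
  · refine varsLt_ite (varsLt_caseOf ⟨hx, varsLt_deltaTm _ _ _⟩ (fun j1 =>
      varsLt_ite (varsLt_sv _ (by omega))
        (varsLt_ite (varsLt_caseOf ⟨hx, varsLt_deltaTm _ _ _⟩ (fun j2 =>
          varsLt_ite (varsLt_sv _ (by omega)) (varsLt_sv _ (by omega))))
          (varsLt_sv _ (by omega)))))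
      (varsLt_ite (varsLt_caseOf ⟨hx, varsLt_deltaTm _ _ _⟩ (fun j1 =>
        varsLt_ite (varsLt_sv _ (by omega)) (varsLt_sv _ (by omega))))
      (varsLt_ite (varsLt_caseOf ⟨hx, varsLt_deltaTm _ _ _⟩ (fun j1 =>
        varsLt_ite (varsLt_sv _ (by omega)) (varsLt_sv _ (by omega))))
        (varsLt_sv _ (by omega))))
theorem varsLt_Grule (c K : ℕ) (R : SRule) : VarsLt c (Grule K R) := by
  show VarsLt (c + 1 + 1) (lamN (K + 5) _)
  have hx : VarsLt (c + 1 + 1 + (K + 5)) (Tm.var (K + 5)) := by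
    show K + 5 < c + 1 + 1 + (K + 5); omega
  refine varsLt_lamN _ (varsLt_caseOf ⟨?_, varsLt_piTm _ _ _⟩ (fun j => ?_))
  · show K + 6 < c + 1 + 1 + (K + 5); omega
  · refine varsLt_ite (varsLt_caseOf hx (fun j1 => varsLt_sv _ (by omega)))
      (varsLt_ite (varsLt_caseOf hx (fun j1 => varsLt_ite (varsLt_sv _ (by omega))
        (varsLt_sv _ (by omega))))
      (varsLt_ite (varsLt_caseOf hx (fun j1 => varsLt_ite (varsLt_sv _ (by omega))
        (varsLt_sv _ (by omega)))) (varsLt_sv _ (by omega))))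
theorem varsLt_Gji (c K i j : ℕ) : VarsLt c (Gji K i j) := by
  unfold Gji; split
  · exact varsLt_deltaTm _ _ _
  split <;> exact varsLt_deltaTm _ _ _

/-! ### Evaluation of the combinators -/

theorem tau_sv {K : ℕ} (σ : ℕ → Tm) (i : ℕ) :
    subst (upN (K + 5) σ) (sv K i) = sv K i := upN_lt σ (by omega)

theorem tau_val {K : ℕ} (σ : ℕ → Tm) (k : ℕ) {v : Tm} (hσ : σ k = v) (hv : VarsLt 0 v) :
    subst (upN (K + 5) σ) (Tm.var (K + 5 + k)) = v := by
  show upN (K + 5) σ (K + 5 + k) = v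
  rw [upN_spec, if_neg (by omega)]
  have : K + 5 + k - (K + 5) = k := by omega
  rw [this, hσ, rename_closed hv]

theorem conv_delta_top (K i : ℕ) :
    Conv (.app (deltaTm K i) (piTm K (K + 3))) (piTm K i) := by
  refine conv_trans (conv_step (Step.beta _ _)) ?_
  show Conv (subst (scons (piTm K (K+3)) Tm.var) (lamN (K + 5) _)) _
  rw [subst_lamN, subst_caseOf]
  have hscrut : subst (upN (K + 5) (scons (piTm K (K+3)) Tm.var)) (Tm.var (K + 5))
      = piTm K (K + 3) := by
    have : K + 5 = K + 5 + 0 := rfl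
    rw [this]; exact tau_val _ 0 rfl (varsLt_piTm _ _ _)
  rw [hscrut]
  refine conv_trans (conv_lamN _ (conv_case _ (by omega) (conv_refl _))) ?_
  have : subst (upN (K + 5) (scons (piTm K (K+3)) Tm.var))
      (if K + 3 = K + 3 then sv K i else sv K (K + 4)) = sv K i := by
    rw [if_pos rfl, tau_sv]
  rw [this]
  exact conv_refl _

theorem conv_G0_app {K : ℕ} {h x : Tm} (hh : VarsLt 0 h) (hx : VarsLt 0 x) :
    Conv (.app (.app (G0 K) h) x)
      (lamN (K + 5) (caseOf K (.app h (piTm K (K + 3))) (fun j =>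
        if j = K + 2 then
          caseOf K x (fun j1 => if j1 = 0 then sv K 0 else if j1 = 1 then sv K (K + 1)
            else sv K (K + 4))
        else if j = 0 then caseOf K x (fun j1 => if j1 = 0 then sv K 1 else sv K (K + 4))
        else if j = 1 then caseOf K x (fun j1 => if j1 = 0 then sv K 0 else sv K (K + 4))
        else sv K (K + 4)))) := by
  refine conv_trans (conv_app2 _ h x) ?_
  set σ2 := scons x (scons h Tm.var) with hσ2
  have hx' : subst (upN (K + 5) σ2) (Tm.var (K + 5)) = x := by
    have : K + 5 = K + 5 + 0 := rfl
    rw [this]; exact tau_val _ 0 rfl hx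
  have hh' : subst (upN (K + 5) σ2) (Tm.var (K + 6)) = h := by
    have : K + 6 = K + 5 + 1 := rfl
    rw [this]; exact tau_val _ 1 rfl hh
  rw [subst_lamN, subst_caseOf]
  have hscrut : subst (upN (K + 5) σ2) (.app (.var (K + 6)) (piTm K (K + 3)))
      = .app h (piTm K (K + 3)) := by
    show Tm.app _ _ = _
    rw [hh', subst_closed (varsLt_piTm 0 _ _)]
  rw [hscrut]
  have hbranch : (fun j => subst (upN (K + 5) σ2)
      ((fun j => if j = K + 2 then
          caseOf K (.var (K + 5))
            (fun j1 => if j1 = 0 then sv K 0 else if j1 = 1 then sv K (K + 1) else sv K (K + 4))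
        else if j = 0 then caseOf K (.var (K + 5)) (fun j1 => if j1 = 0 then sv K 1 else sv K (K + 4))
        else if j = 1 then caseOf K (.var (K + 5)) (fun j1 => if j1 = 0 then sv K 0 else sv K (K + 4))
        else sv K (K + 4)) j)) = (fun j =>
        if j = K + 2 then
          caseOf K x (fun j1 => if j1 = 0 then sv K 0 else if j1 = 1 then sv K (K + 1)
            else sv K (K + 4))
        else if j = 0 then caseOf K x (fun j1 => if j1 = 0 then sv K 1 else sv K (K + 4))
        else if j = 1 then caseOf K x (fun j1 => if j1 = 0 then sv K 0 else sv K (K + 4))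
        else sv K (K + 4)) := by
    funext j
    simp only [apply_ite (subst (upN (K + 5) σ2)), subst_caseOf, hx', tau_sv]
  rw [hbranch]
  exact conv_refl _

theorem conv_Gstar_app {K : ℕ} {h g : Tm} (hh : VarsLt 0 h) (hg : VarsLt 0 g) :
    Conv (.app (.app (Gstar K) h) g)
      (lamN (K + 5) (caseOf K (.app h (piTm K (K + 3))) (fun j =>
        if j = K + 2 then
          caseOf K (.app g (deltaTm K (K + 2))) (fun j1 =>
            if j1 = 0 then sv K 0
            else if j1 = K + 1 then
              caseOf K (.app g (deltaTm K 0))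
                (fun j2 => if j2 = 1 then sv K (K + 1) else sv K (K + 4))
            else sv K (K + 4))
        else if j = 0 then
          caseOf K (.app g (deltaTm K 1))
            (fun j1 => if j1 = 0 then sv K 1 else sv K (K + 4))
        else if j = 1 then
          caseOf K (.app g (deltaTm K (K + 2)))
            (fun j1 => if j1 = 0 then sv K 0 else sv K (K + 4))
        else sv K (K + 4)))) := by
  refine conv_trans (conv_app2 _ h g) ?_
  set σ2 := scons g (scons h Tm.var) with hσ2
  have hg' : subst (upN (K + 5) σ2) (Tm.var (K + 5)) = g := by
    have : K + 5 = K + 5 + 0 := rfl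
    rw [this]; exact tau_val _ 0 rfl hg
  have hh' : subst (upN (K + 5) σ2) (Tm.var (K + 6)) = h := by
    have : K + 6 = K + 5 + 1 := rfl
    rw [this]; exact tau_val _ 1 rfl hh
  rw [subst_lamN, subst_caseOf]
  have hscrut : subst (upN (K + 5) σ2) (.app (.var (K + 6)) (piTm K (K + 3)))
      = .app h (piTm K (K + 3)) := by
    show Tm.app _ _ = _
    rw [hh', subst_closed (varsLt_piTm 0 _ _)]
  rw [hscrut]
  have hδ : ∀ i, subst (upN (K + 5) σ2) (deltaTm K i) = deltaTm K i :=
    fun i => subst_closed (varsLt_deltaTm 0 _ _) _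
  have hbranch : (fun j => subst (upN (K + 5) σ2)
      ((fun j =>
        if j = K + 2 then
          caseOf K (.app (.var (K + 5)) (deltaTm K (K + 2))) (fun j1 =>
            if j1 = 0 then sv K 0
            else if j1 = K + 1 then
              caseOf K (.app (.var (K + 5)) (deltaTm K 0))
                (fun j2 => if j2 = 1 then sv K (K + 1) else sv K (K + 4))
            else sv K (K + 4))
        else if j = 0 then
          caseOf K (.app (.var (K + 5)) (deltaTm K 1))
            (fun j1 => if j1 = 0 then sv K 1 else sv K (K + 4))
        else if j = 1 then
          caseOf K (.app (.var (K + 5)) (deltaTm K (K + 2)))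
            (fun j1 => if j1 = 0 then sv K 0 else sv K (K + 4))
        else sv K (K + 4)) j)) = (fun j =>
        if j = K + 2 then
          caseOf K (.app g (deltaTm K (K + 2))) (fun j1 =>
            if j1 = 0 then sv K 0
            else if j1 = K + 1 then
              caseOf K (.app g (deltaTm K 0))
                (fun j2 => if j2 = 1 then sv K (K + 1) else sv K (K + 4))
            else sv K (K + 4))
        else if j = 0 then
          caseOf K (.app g (deltaTm K 1))
            (fun j1 => if j1 = 0 then sv K 1 else sv K (K + 4))
        else if j = 1 then
          caseOf K (.app g (deltaTm K (K + 2)))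
            (fun j1 => if j1 = 0 then sv K 0 else sv K (K + 4))
        else sv K (K + 4)) := by
    funext j
    simp only [apply_ite (subst (upN (K + 5) σ2)), subst_caseOf, subst_app, hg', hδ, tau_sv]
  rw [hbranch]
  exact conv_refl _
/-! ### The substitution S_G -/

theorem Gji_self (K j : ℕ) : Gji K j j = deltaTm K 1 := by unfold Gji; rw [if_pos rfl]

theorem Gji_succ {K i j : ℕ} (h : i = j + 1) : Gji K i j = deltaTm K 0 := by
  unfold Gji; rw [if_neg (by omega), if_pos h]

theorem Gji_other {K i j : ℕ} (h1 : i ≠ j) (h2 : i ≠ j + 1) :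
    Gji K i j = deltaTm K (K + 2) := by
  unfold Gji; rw [if_neg h1, if_neg h2]

theorem SG_0 {K : ℕ} {Rs : List SRule} {m : ℕ} {P : ℕ → Tm} (h : 0 < m) :
    SG K Rs m P 0 = P m := by
  show (if 0 < m then P (m - 0) else _) = P m
  rw [if_pos h, Nat.sub_zero]

theorem SG_star {K : ℕ} {Rs : List SRule} {m : ℕ} {P : ℕ → Tm} :
    SG K Rs m P m = Gstar K := by
  show (if m < m then _ else if m = m then Gstar K else _) = Gstar K
  rw [if_neg (by omega), if_pos rfl]

theorem SG_z0 {K : ℕ} {Rs : List SRule} {m : ℕ} {P : ℕ → Tm} :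
    SG K Rs m P (m + 2) = G0 K := by
  show (if m + 2 < m then _ else if m + 2 = m then _ else if m + 2 = m + 1 then _
    else if m + 2 = m + 2 then G0 K else _) = G0 K
  rw [if_neg (by omega), if_neg (by omega), if_neg (by omega), if_pos rfl]

theorem SG_ext {K : ℕ} {Rs : List SRule} {m : ℕ} {P P' : ℕ → Tm}
    (h : ∀ j, 1 ≤ j → j ≤ m → P j = P' j) (n : ℕ) :
    SG K Rs m P n = SG K Rs m P' n := by
  unfold SG mkSub
  by_cases hn : n < m
  · rw [if_pos hn, if_pos hn, h (m - n) (by omega) (by omega)]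
  · rw [if_neg hn, if_neg hn]

theorem SG_closed {K : ℕ} {Rs : List SRule} {m : ℕ} {P : ℕ → Tm}
    (hP : ∀ j, 1 ≤ j → j ≤ m → VarsLt 0 (P j)) {n : ℕ} (hn : n < m + 3 + Rs.length) :
    VarsLt 0 (SG K Rs m P n) := by
  unfold SG mkSub
  split_ifs with h1 h2 h3 h4
  · exact hP _ (by omega) (by omega)
  · exact varsLt_Gstar _ _
  · exact varsLt_piTm _ _ _
  · exact varsLt_G0 _ _
  · exact varsLt_Grule _ _ _

theorem scons_SG {K : ℕ} {Rs : List SRule} {m : ℕ} {P : ℕ → Tm} (a : Tm) :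
    ∀ n, n < m + 4 + Rs.length →
    scons a (SG K Rs m P) n = SG K Rs (m + 1) (fun j => if j = m + 1 then a else P j) n := by
  intro n hn
  cases n with
  | zero =>
    show a = _
    unfold SG mkSub
    rw [if_pos (by omega)]
    simp
  | succ n =>
    show SG K Rs m P n = _
    unfold SG mkSub
    dsimp only
    by_cases h1 : n < m
    · rw [if_pos h1, if_pos (by omega : n + 1 < m + 1)]
      have he : m + 1 - (n + 1) = m - n := by omega
      rw [he, if_neg (by omega)]
    by_cases h2 : n = m
    · subst h2
      rw [if_neg h1, if_pos rfl, if_neg (by omega), if_pos (by omega)]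
    by_cases h3 : n = m + 1
    · subst h3
      rw [if_neg h1, if_neg h2, if_pos rfl, if_neg (by omega), if_neg (by omega),
        if_pos (by omega)]
    by_cases h4 : n = m + 2
    · subst h4
      rw [if_neg h1, if_neg h2, if_neg h3, if_pos rfl, if_neg (by omega), if_neg (by omega),
        if_neg (by omega), if_pos (by omega)]
    · have h5 : n < m + 3 + Rs.length := by omega
      rw [if_neg h1, if_neg h2, if_neg h3, if_neg h4, if_pos h5, if_neg (by omega),
        if_neg (by omega), if_neg (by omega), if_neg (by omega),
        if_pos (by omega : n + 1 < m + 1 + 3 + Rs.length)]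
      have he : m + 1 + 3 + Rs.length - (n + 1) = m + 3 + Rs.length - n := by omega
      rw [he]

/-! ### The chain of word expansions -/

def buildAux (N : Tm) (m : ℕ) : ℕ → Tm
  | 0 => .app (.app (.var (m + 2)) (.var 0)) N
  | d + 1 => .app (.app (.var (m - (d + 1))) (.var 0)) (.lam (buildAux N m d))

theorem varsLt_buildAux {N : Tm} {m L : ℕ} (hN : VarsLt (m + 3 + L) N) :
    ∀ d, VarsLt (m - d + 3 + L) (buildAux N m d) := by
  intro d
  induction d with
  | zero =>
    refine ⟨⟨?_, ?_⟩, ?_⟩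
    · show m + 2 < m - 0 + 3 + L; omega
    · show 0 < m - 0 + 3 + L; omega
    · exact varsLt_mono N (by omega) hN
  | succ d ih =>
    refine ⟨⟨?_, ?_⟩, ?_⟩
    · show m - (d+1) < m - (d+1) + 3 + L; omega
    · show 0 < m - (d+1) + 3 + L; omega
    · show VarsLt (m - (d+1) + 3 + L + 1) (buildAux N m d)
      exact varsLt_mono _ (by omega) ih

theorem rset_buildAux {N : Tm} {m L : ℕ} (hQ : Qset L m N) :
    ∀ d, 1 ≤ m - d → Rset L (m - d) (buildAux N m d) := by
  intro d
  induction d with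
  | zero =>
    intro _
    show Rset L (m - 0) (.app (.app (.var (m + 2)) (.var 0)) N)
    rw [Nat.sub_zero]
    exact Rset.init m _ N hQ
  | succ d ih =>
    intro hd
    have h1 : m - (d + 1) + 1 = m - d := by omega
    have := Rset.expand (m - (d + 1)) (.var 0) (buildAux N m d) (by rw [h1]; exact ih (by omega))
    exact this

theorem gamma_succ (L K m : ℕ) : GammaEnv L K (m + 1) = tyP K :: GammaEnv L K m := by
  unfold GammaEnv
  rw [List.replicate_succ]
  rfl

theorem gamma_get_star (L K m : ℕ) : (GammaEnv L K m)[m]? = some (tyZstar K) := by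
  induction m with
  | zero => rfl
  | succ m ih => rw [gamma_succ]; exact ih

theorem gamma_get_z1 (L K m : ℕ) : (GammaEnv L K m)[m + 1]? = some (tyK K) := by
  induction m with
  | zero => rfl
  | succ m ih => rw [gamma_succ]; exact ih

theorem gamma_get_z0 (L K m : ℕ) : (GammaEnv L K m)[m + 2]? = some (tyZ0 K) := by
  induction m with
  | zero => rfl
  | succ m ih => rw [gamma_succ]; exact ih

theorem gamma_get_p (L K : ℕ) : ∀ (m n : ℕ), n < m →
    (GammaEnv L K m)[n]? = some (tyP K) := by
  intro m
  induction m with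
  | zero => intro n hn; omega
  | succ m ih =>
    intro n hn
    rw [gamma_succ]
    cases n with
    | zero => rfl
    | succ n => exact ih n (by omega)

theorem stlc_buildAux {N : Tm} {m L K : ℕ}
    (hty : Stlc (GammaEnv L K m) N (tyK K)) :
    ∀ d, 1 ≤ m - d → Stlc (GammaEnv L K (m - d)) (buildAux N m d) (tyK K) := by
  intro d
  induction d with
  | zero =>
    intro hd
    show Stlc _ (.app (.app (.var (m + 2)) (.var 0)) N) _
    rw [Nat.sub_zero]
    refine Stlc.app (s := tyK K) (Stlc.app (s := tyP K) ?_ ?_) hty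
    · exact Stlc.var (gamma_get_z0 L K m)
    · exact Stlc.var (gamma_get_p L K m 0 (by omega))
  | succ d ih =>
    intro hd
    show Stlc _ (.app (.app (.var (m - (d + 1))) (.var 0)) (.lam (buildAux N m d))) _
    refine Stlc.app (s := .arr (tyP K) (tyK K)) (Stlc.app (s := tyP K) ?_ ?_) ?_
    · exact Stlc.var (gamma_get_star L K (m - (d + 1)))
    · exact Stlc.var (gamma_get_p L K (m - (d + 1)) 0 (by omega))
    · refine Stlc.lam ?_
      have h1 : m - (d + 1) + 1 = m - d := by omega
      rw [← gamma_succ, h1]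
      exact ih (by omega)

/-! ### Final evaluation helper lemmas -/

theorem conv_G0_eval {K : ℕ} {h x : Tm} (hh : VarsLt 0 h) (hx : VarsLt 0 x)
    {t r : ℕ} (ht : t < K + 5)
    (h1 : Conv (.app h (piTm K (K + 3))) (piTm K t))
    (hbr : Conv (if t = K + 2 then
          caseOf K x (fun j1 => if j1 = 0 then sv K 0 else if j1 = 1 then sv K (K + 1)
            else sv K (K + 4))
        else if t = 0 then caseOf K x (fun j1 => if j1 = 0 then sv K 1 else sv K (K + 4))
        else if t = 1 then caseOf K x (fun j1 => if j1 = 0 then sv K 0 else sv K (K + 4))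
        else sv K (K + 4)) (sv K r)) :
    Conv (.app (.app (G0 K) h) x) (piTm K r) :=
  conv_trans (conv_G0_app hh hx) (conv_lamN _ (conv_trans (conv_case _ ht h1) hbr))

theorem conv_Gstar_eval {K : ℕ} {h g : Tm} (hh : VarsLt 0 h) (hg : VarsLt 0 g)
    {t r : ℕ} (ht : t < K + 5)
    (h1 : Conv (.app h (piTm K (K + 3))) (piTm K t))
    (hbr : Conv (if t = K + 2 then
          caseOf K (.app g (deltaTm K (K + 2))) (fun j1 =>
            if j1 = 0 then sv K 0
            else if j1 = K + 1 then
              caseOf K (.app g (deltaTm K 0))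
                (fun j2 => if j2 = 1 then sv K (K + 1) else sv K (K + 4))
            else sv K (K + 4))
        else if t = 0 then
          caseOf K (.app g (deltaTm K 1))
            (fun j1 => if j1 = 0 then sv K 1 else sv K (K + 4))
        else if t = 1 then
          caseOf K (.app g (deltaTm K (K + 2)))
            (fun j1 => if j1 = 0 then sv K 0 else sv K (K + 4))
        else sv K (K + 4)) (sv K r)) :
    Conv (.app (.app (Gstar K) h) g) (piTm K r) :=
  conv_trans (conv_Gstar_app hh hg) (conv_lamN _ (conv_trans (conv_case _ ht h1) hbr))
theorem qset_varsLt {L : ℕ} : ∀ {m : ℕ} {M : Tm}, Qset L m M → VarsLt (m + 3 + L) M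
  | _, _, .z1 m => by show m + 1 < m + 3 + L; omega
  | _, _, .rule m i j M h1 h2 h3 h4 hq =>
      ⟨⟨by show m + 3 + L - i < m + 3 + L; omega, by show m - j < m + 3 + L; omega⟩,
        qset_varsLt hq⟩
  | _, _, .ruleEta m i j M h1 h2 h3 h4 hq =>
      ⟨⟨by show m + 3 + L - i < m + 3 + L; omega,
        by exact ⟨by show m - j + 1 < m + 3 + L + 1; omega, by show 0 < m + 3 + L + 1; omega⟩⟩,
        qset_varsLt hq⟩

theorem main_conv (K : ℕ) (Rs : List SRule) (m : ℕ) (hm : 0 < m) (N : Tm)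
    (hN : VarsLt (m + 3 + Rs.length) N)
    (h0 : Conv (subst (SG K Rs m (fun j => Gji K 0 j)) N) (piTm K 1))
    (hi : ∀ i, 1 ≤ i → i ≤ m + 1 →
      Conv (subst (SG K Rs m (fun j => Gji K i j)) N) (piTm K 0)) :
    ∀ d, 1 ≤ m - d → ∀ (P : ℕ → Tm) (i : ℕ), i ≤ m + 1 →
      (i = 0 ∨ (1 ≤ i ∧ i ≤ (m - d) + 1)) →
      (∀ j, 1 ≤ j → j ≤ m - d → P j = Gji K i j) →
      Conv (subst (SG K Rs (m - d) P) (buildAux N m d))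
        (piTm K (if i = 0 then K + 1 else if i ≤ m - d then 0 else 1)) := by
  intro d
  induction d with
  | zero =>
    intro _ P i hile hior hP
    simp only [Nat.sub_zero] at hior hP ⊢
    simp only [buildAux, subst]
    rw [SG_z0, SG_0 hm]
    have hPm : P m = Gji K i m := hP m (by omega) (le_refl m)
    have hPc : ∀ j, 1 ≤ j → j ≤ m → VarsLt 0 (P j) := fun j h1 h2 => by
      rw [hP j h1 h2]; exact varsLt_Gji _ _ _ _
    have hxc : VarsLt 0 (subst (SG K Rs m P) N) :=
      varsLt_subst N hN (fun n hn => SG_closed hPc hn)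
    have hagree : subst (SG K Rs m P) N = subst (SG K Rs m (fun j => Gji K i j)) N :=
      subst_ext N (SG_ext hP)
    rw [hPm]
    rcases Nat.eq_zero_or_pos i with hi0 | hipos
    · subst hi0
      rw [Gji_other (by omega) (by omega)]
      rw [show (if (0:ℕ) = 0 then K + 1 else if 0 ≤ m then 0 else 1) = K + 1 from by
        split_ifs <;> first | exact (‹False›).elim | omega]
      have hx : Conv (subst (SG K Rs m P) N) (piTm K 1) := by rw [hagree]; exact h0
      refine conv_G0_eval (varsLt_deltaTm _ _ _) hxc (t := K + 2) (by omega)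
        (conv_delta_top K (K + 2)) ?_
      rw [if_pos rfl]
      refine conv_trans (conv_case _ (by omega) hx) ?_
      rw [if_neg (by omega), if_pos rfl]
      exact conv_refl _
    · have hx : Conv (subst (SG K Rs m P) N) (piTm K 0) := by
        rw [hagree]; exact hi i hipos hile
      by_cases him : i = m
      · subst him
        rw [Gji_self]
        rw [show (if i = 0 then K + 1 else if i ≤ i then 0 else 1) = 0 from by
          split_ifs <;> first | exact (‹False›).elim | omega]
        refine conv_G0_eval (varsLt_deltaTm _ _ _) hxc (t := 1) (by omega)
          (conv_delta_top K 1) ?_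
        rw [if_neg (by omega), if_neg (by omega), if_pos rfl]
        refine conv_trans (conv_case _ (by omega) hx) ?_
        rw [if_pos rfl]
        exact conv_refl _
      by_cases him1 : i = m + 1
      · subst him1
        rw [Gji_succ rfl]
        rw [show (if m + 1 = 0 then K + 1 else if m + 1 ≤ m then 0 else 1) = 1 from by
          split_ifs <;> first | exact (‹False›).elim | omega]
        refine conv_G0_eval (varsLt_deltaTm _ _ _) hxc (t := 0) (by omega)
          (conv_delta_top K 0) ?_
        rw [if_neg (by omega), if_pos rfl]
        refine conv_trans (conv_case _ (by omega) hx) ?_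
        rw [if_pos rfl]
        exact conv_refl _
      · rw [Gji_other (by omega) (by omega)]
        rw [show (if i = 0 then K + 1 else if i ≤ m then 0 else 1) = 0 from by
          split_ifs <;> first | exact (‹False›).elim | omega]
        refine conv_G0_eval (varsLt_deltaTm _ _ _) hxc (t := K + 2) (by omega)
          (conv_delta_top K (K + 2)) ?_
        rw [if_pos rfl]
        refine conv_trans (conv_case _ (by omega) hx) ?_
        rw [if_pos rfl]
        exact conv_refl _
  | succ d ih =>
    intro hd P i hile hior hP
    simp only [buildAux, subst]
    rw [SG_star, SG_0 (by omega)]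
    have hPk : P (m - (d + 1)) = Gji K i (m - (d + 1)) := hP _ (by omega) (le_refl _)
    have hPc : ∀ j, 1 ≤ j → j ≤ m - (d + 1) → VarsLt 0 (P j) := fun j h1 h2 => by
      rw [hP j h1 h2]; exact varsLt_Gji _ _ _ _
    have hB : VarsLt (m - (d + 1) + 1 + 3 + Rs.length) (buildAux N m d) :=
      varsLt_mono _ (by omega) (varsLt_buildAux hN d)
    have hgc : VarsLt 0 (Tm.lam (subst (up (SG K Rs (m - (d + 1)) P)) (buildAux N m d))) := by
      show VarsLt 1 _
      refine varsLt_subst _ hB (fun n hn => ?_)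
      cases n with
      | zero => show (0:ℕ) < 1; omega
      | succ n =>
        show VarsLt 1 (rename Nat.succ (SG K Rs (m - (d + 1)) P n))
        have hcl : VarsLt 0 (SG K Rs (m - (d + 1)) P n) := SG_closed hPc (by omega)
        rw [rename_closed hcl]
        exact varsLt_mono _ (by omega) hcl
    have happ : ∀ (a : Tm) (i' : ℕ), i' ≤ m + 1 → (i' = 0 ∨ (1 ≤ i' ∧ i' ≤ m - d + 1)) →
        (∀ j, 1 ≤ j → j ≤ m - d → (if j = m - (d + 1) + 1 then a else P j) = Gji K i' j) →
        Conv (.app (.lam (subst (up (SG K Rs (m - (d + 1)) P)) (buildAux N m d))) a)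
          (piTm K (if i' = 0 then K + 1 else if i' ≤ m - d then 0 else 1)) := by
      intro a i' h1 h2 h3
      refine conv_trans (conv_step (Step.beta _ _)) ?_
      rw [subst1_subst_up]
      have heq : subst (scons a (SG K Rs (m - (d + 1)) P)) (buildAux N m d)
          = subst (SG K Rs (m - d) (fun j => if j = m - (d + 1) + 1 then a else P j))
              (buildAux N m d) := by
        refine subst_ext_lt _ hB (fun n hn => ?_)
        rw [scons_SG a n (by omega)]
        have he : m - (d + 1) + 1 = m - d := by omega
        rw [he]
      rw [heq]
      exact ih (by omega) _ i' h1 h2 h3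
    rcases Nat.eq_zero_or_pos i with hi0 | hipos
    · -- i = 0 : the "$" case
      subst hi0
      rw [hPk, Gji_other (by omega) (by omega)]
      rw [show (if (0:ℕ) = 0 then K + 1 else if 0 ≤ m - (d+1) then 0 else 1) = K + 1 from by
        split_ifs <;> first | exact (‹False›).elim | omega]
      refine conv_Gstar_eval (varsLt_deltaTm _ _ _) hgc (t := K + 2) (by omega)
        (conv_delta_top K (K + 2)) ?_
      rw [if_pos rfl]
      have u1 := happ (deltaTm K (K + 2)) 0 (by omega) (Or.inl rfl) (fun j h1 h2 => by
        by_cases hj : j = m - (d + 1) + 1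
        · rw [if_pos hj, Gji_other (by omega) (by omega)]
        · rw [if_neg hj, hP j h1 (by omega)])
      rw [show (if (0:ℕ) = 0 then K + 1 else if 0 ≤ m - d then 0 else 1) = K + 1 from by
        split_ifs <;> first | exact (‹False›).elim | omega] at u1
      refine conv_trans (conv_case _ (by omega) u1) ?_
      rw [if_neg (by omega), if_pos rfl]
      have u2 := happ (deltaTm K 0) (m - d + 1) (by omega) (Or.inr ⟨by omega, by omega⟩)
        (fun j h1 h2 => by
          by_cases hj : j = m - (d + 1) + 1
          · have hj' : j = m - d := by omega
            subst hj'
            rw [if_pos hj, Gji_succ rfl]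
          · rw [if_neg hj, hP j h1 (by omega), Gji_other (by omega) (by omega),
              Gji_other (by omega) (by omega)])
      rw [show (if m - d + 1 = 0 then K + 1 else if m - d + 1 ≤ m - d then 0 else 1) = 1 from by
        split_ifs <;> first | exact (‹False›).elim | omega] at u2
      refine conv_trans (conv_case _ (by omega) u2) ?_
      rw [if_pos rfl]
      exact conv_refl _
    · by_cases hik : i < m - (d + 1)
      · -- propagation case: p_k = δ_•
        rw [hPk, Gji_other (by omega) (by omega)]
        rw [show (if i = 0 then K + 1 else if i ≤ m - (d+1) then 0 else 1) = 0 from by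
          split_ifs <;> first | exact (‹False›).elim | omega]
        refine conv_Gstar_eval (varsLt_deltaTm _ _ _) hgc (t := K + 2) (by omega)
          (conv_delta_top K (K + 2)) ?_
        rw [if_pos rfl]
        have u1 := happ (deltaTm K (K + 2)) i (by omega) (Or.inr ⟨by omega, by omega⟩)
          (fun j h1 h2 => by
            by_cases hj : j = m - (d + 1) + 1
            · rw [if_pos hj, Gji_other (by omega) (by omega)]
            · rw [if_neg hj, hP j h1 (by omega)])
        rw [show (if i = 0 then K + 1 else if i ≤ m - d then 0 else 1) = 0 from by
          split_ifs <;> first | exact (‹False›).elim | omega] at u1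
        refine conv_trans (conv_case _ (by omega) u1) ?_
        rw [if_pos rfl]
        exact conv_refl _
      by_cases hik2 : i = m - (d + 1)
      · -- p_k = δ_1
        rw [hPk, hik2, Gji_self]
        rw [show (if m - (d+1) = 0 then K + 1 else if m - (d+1) ≤ m - (d+1) then 0 else 1) = 0
          from by split_ifs <;> first | exact (‹False›).elim | omega]
        refine conv_Gstar_eval (varsLt_deltaTm _ _ _) hgc (t := 1) (by omega)
          (conv_delta_top K 1) ?_
        rw [if_neg (by omega), if_neg (by omega), if_pos rfl]
        have u1 := happ (deltaTm K (K + 2)) i (by omega) (Or.inr ⟨by omega, by omega⟩)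
          (fun j h1 h2 => by
            by_cases hj : j = m - (d + 1) + 1
            · rw [if_pos hj, Gji_other (by omega) (by omega)]
            · rw [if_neg hj, hP j h1 (by omega)])
        rw [show (if i = 0 then K + 1 else if i ≤ m - d then 0 else 1) = 0 from by
          split_ifs <;> first | exact (‹False›).elim | omega] at u1
        refine conv_trans (conv_case _ (by omega) u1) ?_
        rw [if_pos rfl]
        exact conv_refl _
      · -- i = m - (d+1) + 1 : p_k = δ_0
        have hik3 : i = m - (d + 1) + 1 := by
          rcases hior with h | h
          · omega
          · omega
        rw [hPk, Gji_succ hik3]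
        rw [show (if i = 0 then K + 1 else if i ≤ m - (d+1) then 0 else 1) = 1 from by
          split_ifs <;> first | exact (‹False›).elim | omega]
        refine conv_Gstar_eval (varsLt_deltaTm _ _ _) hgc (t := 0) (by omega)
          (conv_delta_top K 0) ?_
        rw [if_neg (by omega), if_pos rfl]
        have u1 := happ (deltaTm K 1) i (by omega) (Or.inr ⟨by omega, by omega⟩)
          (fun j h1 h2 => by
            by_cases hj : j = m - (d + 1) + 1
            · rw [if_pos hj, hik3, ← hj, Gji_self]
            · rw [if_neg hj, hP j h1 (by omega)])
        rw [show (if i = 0 then K + 1 else if i ≤ m - d then 0 else 1) = 0 from by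
          split_ifs <;> first | exact (‹False›).elim | omega] at u1
        refine conv_trans (conv_case _ (by omega) u1) ?_
        rw [if_pos rfl]
        exact conv_refl _
/-- Converse of the R-semantics lemma: for `m > 0`, if `N ∈ Q_m` with `Γ_m ⊢ N : κ`,
`S_G(N)[p_1 := G_1^0, …, p_m := G_m^0] =β π_1`, and
`S_G(N)[p_1 := G_1^i, …, p_m := G_m^i] =β π_0` for every `i ∈ {1,…,m+1}`, then there
exists `M ∈ R_1` with `Γ_1 ⊢ M : κ`, `S_G(M)[p_1 := δ_•] =β π_$`,
`S_G(M)[p_1 := δ_1] =β π_0`, and `S_G(M)[p_1 := δ_0] =β π_1`. -/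
theorem R_ssts_complete (K : ℕ) (hK : 1 ≤ K) (Rs : List SRule) (hL : Rs ≠ [])
    (hsym : ∀ r ∈ Rs, r.1.1 ≤ K ∧ r.1.2 ≤ K ∧ r.2.1 ≤ K ∧ r.2.2 ≤ K)
    (m : ℕ) (hm : 0 < m) (N : Tm) (hQ : Qset Rs.length m N)
    (hty : Stlc (GammaEnv Rs.length K m) N (tyK K))
    (h0 : Conv (subst (SG K Rs m (fun j => Gji K 0 j)) N) (piTm K 1))
    (hi : ∀ i, 1 ≤ i → i ≤ m + 1 →
      Conv (subst (SG K Rs m (fun j => Gji K i j)) N) (piTm K 0)) :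
    ∃ M : Tm, Rset Rs.length 1 M ∧
      Stlc (GammaEnv Rs.length K 1) M (tyK K) ∧
      Conv (subst (SG K Rs 1 (fun _ => deltaTm K (K + 2))) M) (piTm K (K + 1)) ∧
      Conv (subst (SG K Rs 1 (fun _ => deltaTm K 1)) M) (piTm K 0) ∧
      Conv (subst (SG K Rs 1 (fun _ => deltaTm K 0)) M) (piTm K 1) := by
  have hN : VarsLt (m + 3 + Rs.length) N := qset_varsLt hQ
  have hm1 : m - (m - 1) = 1 := by omega
  have hmain := main_conv K Rs m hm N hN h0 hi (m - 1) (by omega)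
  rw [hm1] at hmain
  refine ⟨buildAux N m (m - 1), ?_, ?_, ?_, ?_, ?_⟩
  · have := rset_buildAux hQ (m - 1) (by omega)
    rwa [hm1] at this
  · have := stlc_buildAux hty (m - 1) (by omega)
    rwa [hm1] at this
  · have := hmain (fun _ => deltaTm K (K + 2)) 0 (by omega) (Or.inl rfl)
      (fun j h1 h2 => (Gji_other (by omega) (by omega)).symm)
    rwa [show (if (0:ℕ) = 0 then K + 1 else if 0 ≤ 1 then 0 else 1) = K + 1 from by
      split_ifs <;> first | exact (‹False›).elim | omega] at this
  · have := hmain (fun _ => deltaTm K 1) 1 (by omega) (Or.inr ⟨by omega, by omega⟩)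
      (fun j h1 h2 => by
        have : j = 1 := by omega
        subst this
        exact (Gji_self K 1).symm)
    rwa [show (if (1:ℕ) = 0 then K + 1 else if 1 ≤ 1 then 0 else 1) = 0 from by
      split_ifs <;> first | exact (‹False›).elim | omega] at this
  · have := hmain (fun _ => deltaTm K 0) 2 (by omega) (Or.inr ⟨by omega, by omega⟩)
      (fun j h1 h2 => by
        have : j = 1 := by omega
        subst this
        exact (Gji_succ rfl).symm)
    rwa [show (if (2:ℕ) = 0 then K + 1 else if 2 ≤ 1 then 0 else 1) = 1 from by
      split_ifs <;> first | exact (‹False›).elim | omega] at this
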